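/- Let ω, R ∈ ℝ, let v : ℝ³ → ℂ³ be differentiable, and let ψ : ℝ³ → ℂ³ be such that for all ζ ∈ ℝ³, (|ζ|² − i R ζ₁) v(ζ) − ω [ ((e₁×ζ)·∇) v(ζ) − e₁ × v(ζ) ] = ψ(ζ), where ((e₁×ζ)·∇)v(ζ) denotes the derivative of v at ζ in the direction e₁×ζ, e₁ = (1,0,0), × is the (ℂ-bilinearly extended) cross product, and ζ₁ is the first coordinate of ζ. Define 𝒱(t, ζ) := O(ωt) v(O(ωt)ᵀ ζ). Then for every t ∈ ℝ and ζ ∈ ℝ³, the map t ↦ 𝒱(t, ζ) is differentiable and ∂_t 𝒱(t, ζ) + (|ζ|² − i R ζ₁) 𝒱(t, ζ) = O(ωt) ψ(O(ωt)ᵀ ζ). -/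

import Mathlib

open MeasureTheory
open scoped ENNReal

noncomputable section

abbrev E3 := EuclideanSpace ℝ (Fin 3)
abbrev C3 := EuclideanSpace ℂ (Fin 3)

/-- The rotation `O(θ)` (rows `(1,0,0), (0,cos θ, -sin θ), (0,sin θ, cos θ)`),
acting ℂ-linearly on `ℂ³`. -/
def OrotC (θ : ℝ) (w : C3) : C3 :=
  (WithLp.equiv 2 (Fin 3 → ℂ)).symm
    ![w 0, (Real.cos θ : ℂ) * w 1 - (Real.sin θ : ℂ) * w 2,
      (Real.sin θ : ℂ) * w 1 + (Real.cos θ : ℂ) * w 2]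

/-- The transpose `O(θ)ᵀ` acting on `ℝ³`. -/
def OrotTR (θ : ℝ) (x : E3) : E3 :=
  (WithLp.equiv 2 (Fin 3 → ℝ)).symm
    ![x 0, Real.cos θ * x 1 + Real.sin θ * x 2,
      -(Real.sin θ) * x 1 + Real.cos θ * x 2]

/-- `e₁ × ζ = (0, -ζ₃, ζ₂)` for a real vector `ζ`. -/
def e1crossR (ζ : E3) : E3 :=
  (WithLp.equiv 2 (Fin 3 → ℝ)).symm ![0, -ζ 2, ζ 1]

/-- `e₁ × w = (0, -w₃, w₂)` for a complex vector `w` (ℂ-bilinear extension). -/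
def e1crossC (w : C3) : C3 :=
  (WithLp.equiv 2 (Fin 3 → ℂ)).symm ![0, -w 2, w 1]

/-- Build a `HasDerivAt` into `PiLp 2` from componentwise derivatives. -/
lemma hasDerivAt_of_components {α : Type} [NormedAddCommGroup α] [NormedSpace ℝ α]
    (f : ℝ → PiLp 2 (fun _ : Fin 3 => α)) (D : PiLp 2 (fun _ : Fin 3 => α)) (t : ℝ)
    (h : ∀ i, HasDerivAt (fun τ => f τ i) (D i) t) : HasDerivAt f D t := by
  let e := PiLp.continuousLinearEquiv 2 ℝ (fun _ : Fin 3 => α)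
  have h2 : HasDerivAt (fun τ => e (f τ)) (e D) t := hasDerivAt_pi.2 h
  have h3 := e.symm.toContinuousLinearMap.hasFDerivAt.comp_hasDerivAt t h2
  have h4 : (⇑(e.symm : _ →L[ℝ] _) ∘ fun τ => e (f τ)) = f :=
    funext fun τ => e.symm_apply_apply (f τ)
  have h5 : (e.symm : _ →L[ℝ] _) (e D) = D := e.symm_apply_apply D
  rw [h4, h5] at h3
  exact h3

/-- Components of a `HasDerivAt` into `PiLp 2`. -/
lemma hasDerivAt_component {α : Type} [NormedAddCommGroup α] [NormedSpace ℝ α]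
    {f : ℝ → PiLp 2 (fun _ : Fin 3 => α)} {D : PiLp 2 (fun _ : Fin 3 => α)} {t : ℝ}
    (h : HasDerivAt f D t) (i : Fin 3) : HasDerivAt (fun τ => f τ i) (D i) t := by
  let e := PiLp.continuousLinearEquiv 2 ℝ (fun _ : Fin 3 => α)
  have h2 := e.toContinuousLinearMap.hasFDerivAt.comp_hasDerivAt t h
  exact hasDerivAt_pi.1 h2 i

lemma OrotC_sub (θ : ℝ) (a b : C3) : OrotC θ (a - b) = OrotC θ a - OrotC θ b := by
  ext i
  fin_cases i <;>
    simp [OrotC, WithLp.equiv_symm_apply, PiLp.toLp_apply, PiLp.sub_apply] <;> ring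

lemma OrotC_smul (θ : ℝ) (c : ℂ) (a : C3) : OrotC θ (c • a) = c • OrotC θ a := by
  ext i
  fin_cases i <;>
    simp [OrotC, WithLp.equiv_symm_apply, PiLp.toLp_apply, PiLp.smul_apply, smul_eq_mul] <;> ring

lemma norm_OrotTR (θ : ℝ) (ζ : E3) : ‖OrotTR θ ζ‖ = ‖ζ‖ := by
  simp only [EuclideanSpace.norm_eq]
  congr 1
  simp only [OrotTR, WithLp.equiv_symm_apply, PiLp.toLp_apply, Fin.sum_univ_three,
    Matrix.cons_val_zero, Matrix.cons_val_one, Matrix.head_cons, Real.norm_eq_abs, sq_abs,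
    Matrix.cons_val_two, Matrix.tail_cons]
  linear_combination (ζ 1 ^ 2 + ζ 2 ^ 2) * Real.sin_sq_add_cos_sq θ

lemma OrotTR_zero (θ : ℝ) (ζ : E3) : OrotTR θ ζ 0 = ζ 0 := by
  simp [OrotTR, WithLp.equiv_symm_apply, PiLp.toLp_apply]

/-- If `v` is differentiable and satisfies
`(|ζ|² - iRζ₁) v(ζ) - ω[((e₁×ζ)·∇)v(ζ) - e₁×v(ζ)] = ψ(ζ)` for all `ζ`, then
`𝒱(t,ζ) := O(ωt) v(O(ωt)ᵀ ζ)` is differentiable in `t` and satisfies the ODE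
`∂ₜ𝒱 + (|ζ|² - iRζ₁) 𝒱 = O(ωt) ψ(O(ωt)ᵀ ζ)`. -/
theorem stmt12 (ω R : ℝ) (v ψ : E3 → C3) (hv : Differentiable ℝ v)
    (h : ∀ ζ : E3,
      ((‖ζ‖ ^ 2 : ℂ) - Complex.I * (R : ℂ) * (ζ 0 : ℂ)) • v ζ
          - (ω : ℂ) • (fderiv ℝ v ζ (e1crossR ζ) - e1crossC (v ζ)) = ψ ζ) :
    ∀ (t : ℝ) (ζ : E3),
      HasDerivAt (fun τ : ℝ => OrotC (ω * τ) (v (OrotTR (ω * τ) ζ)))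
        (OrotC (ω * t) (ψ (OrotTR (ω * t) ζ))
          - ((‖ζ‖ ^ 2 : ℂ) - Complex.I * (R : ℂ) * (ζ 0 : ℂ)) •
              OrotC (ω * t) (v (OrotTR (ω * t) ζ)))
        t := by
  intro t ζ
  set y : ℝ → E3 := fun τ => OrotTR (ω * τ) ζ with hy_def
  -- derivative of the inner argument
  have hθ : HasDerivAt (fun τ : ℝ => ω * τ) ω t := by
    simpa using (hasDerivAt_id t).const_mul ω
  have hcos : HasDerivAt (fun τ : ℝ => Real.cos (ω * τ)) (-Real.sin (ω * t) * ω) t :=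
    (Real.hasDerivAt_cos (ω * t)).comp t hθ
  have hsin : HasDerivAt (fun τ : ℝ => Real.sin (ω * τ)) (Real.cos (ω * t) * ω) t :=
    (Real.hasDerivAt_sin (ω * t)).comp t hθ
  have hy : HasDerivAt y ((-ω) • e1crossR (y t)) t := by
    apply hasDerivAt_of_components
    intro i
    fin_cases i
    · show HasDerivAt (fun τ => y τ 0) (((-ω) • e1crossR (y t)) 0) t
      have : (fun τ : ℝ => y τ 0) = fun _ => ζ 0 := by
        funext τ; simp [hy_def, OrotTR, WithLp.equiv_symm_apply, PiLp.toLp_apply]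
      rw [this]
      have h0 : ((-ω) • e1crossR (y t)) (0 : Fin 3) = 0 := by
        simp [e1crossR, WithLp.equiv_symm_apply, PiLp.toLp_apply, PiLp.smul_apply]
      rw [h0]
      exact hasDerivAt_const t _
    · show HasDerivAt (fun τ => y τ 1) (((-ω) • e1crossR (y t)) 1) t
      have hfun : (fun τ : ℝ => y τ 1) =
          fun τ => Real.cos (ω * τ) * ζ 1 + Real.sin (ω * τ) * ζ 2 := by
        funext τ; simp [hy_def, OrotTR, WithLp.equiv_symm_apply, PiLp.toLp_apply]
      rw [hfun]
      have hd := (hcos.mul_const (ζ 1)).add (hsin.mul_const (ζ 2))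
      refine hd.congr_deriv ?_
      erw [WithLp.ofLp_smul]
      simp [hy_def, e1crossR, OrotTR, WithLp.equiv_symm_apply, PiLp.toLp_apply, PiLp.smul_apply, smul_eq_mul]
      ring
    · show HasDerivAt (fun τ => y τ 2) (((-ω) • e1crossR (y t)) 2) t
      have hfun : (fun τ : ℝ => y τ 2) =
          fun τ => -Real.sin (ω * τ) * ζ 1 + Real.cos (ω * τ) * ζ 2 := by
        funext τ; simp [hy_def, OrotTR, WithLp.equiv_symm_apply, PiLp.toLp_apply]
      rw [hfun]
      have hd := ((hsin.neg).mul_const (ζ 1)).add (hcos.mul_const (ζ 2))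
      refine hd.congr_deriv ?_
      erw [WithLp.ofLp_smul]
      simp [hy_def, e1crossR, OrotTR, WithLp.equiv_symm_apply, PiLp.toLp_apply, PiLp.smul_apply, smul_eq_mul]
      ring
  -- derivative of w = v ∘ y
  set g : C3 := fderiv ℝ v (y t) (e1crossR (y t)) with hg_def
  have hw : HasDerivAt (fun τ => v (y τ)) ((-ω : ℝ) • g) t := by
    have := (hv (y t)).hasFDerivAt.comp_hasDerivAt t hy
    simp only [hg_def, _root_.map_smul] at this
    exact this
  have hwc := fun i => hasDerivAt_component hw i
  -- target auxiliary vector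
  set u : C3 := (ω : ℂ) • e1crossC (v (y t)) - (ω : ℂ) • g with hu_def
  have hD : HasDerivAt (fun τ : ℝ => OrotC (ω * τ) (v (y τ))) (OrotC (ω * t) u) t := by
    apply hasDerivAt_of_components
    intro i
    have hcosC : HasDerivAt (fun τ : ℝ => ((Real.cos (ω * τ) : ℝ) : ℂ))
        ((-Real.sin (ω * t) * ω : ℝ) : ℂ) t := hcos.ofReal_comp
    have hsinC : HasDerivAt (fun τ : ℝ => ((Real.sin (ω * τ) : ℝ) : ℂ))
        ((Real.cos (ω * t) * ω : ℝ) : ℂ) t := hsin.ofReal_comp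
    fin_cases i
    · show HasDerivAt (fun τ => OrotC (ω * τ) (v (y τ)) 0) (OrotC (ω * t) u 0) t
      have hfun : (fun τ : ℝ => OrotC (ω * τ) (v (y τ)) 0) = fun τ => v (y τ) 0 := by
        funext τ; simp [OrotC, WithLp.equiv_symm_apply, PiLp.toLp_apply]
      rw [hfun]
      refine (hwc 0).congr_deriv ?_
      simp [hu_def, OrotC, e1crossC, WithLp.equiv_symm_apply, PiLp.toLp_apply, PiLp.smul_apply,
        PiLp.sub_apply, smul_eq_mul, Complex.real_smul]
      try push_cast
      try ring
    · show HasDerivAt (fun τ => OrotC (ω * τ) (v (y τ)) 1) (OrotC (ω * t) u 1) t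
      have hfun : (fun τ : ℝ => OrotC (ω * τ) (v (y τ)) 1) =
          fun τ => ((Real.cos (ω * τ) : ℝ) : ℂ) * v (y τ) 1
            - ((Real.sin (ω * τ) : ℝ) : ℂ) * v (y τ) 2 := by
        funext τ; simp [OrotC, WithLp.equiv_symm_apply, PiLp.toLp_apply]
      rw [hfun]
      have hd := (hcosC.mul (hwc 1)).sub (hsinC.mul (hwc 2))
      refine hd.congr_deriv ?_
      simp [hu_def, OrotC, e1crossC, WithLp.equiv_symm_apply, PiLp.toLp_apply, PiLp.smul_apply,
        PiLp.sub_apply, smul_eq_mul, Complex.real_smul]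
      try push_cast
      try ring
    · show HasDerivAt (fun τ => OrotC (ω * τ) (v (y τ)) 2) (OrotC (ω * t) u 2) t
      have hfun : (fun τ : ℝ => OrotC (ω * τ) (v (y τ)) 2) =
          fun τ => ((Real.sin (ω * τ) : ℝ) : ℂ) * v (y τ) 1
            + ((Real.cos (ω * τ) : ℝ) : ℂ) * v (y τ) 2 := by
        funext τ; simp [OrotC, WithLp.equiv_symm_apply, PiLp.toLp_apply]
      rw [hfun]
      have hd := (hsinC.mul (hwc 1)).add (hcosC.mul (hwc 2))
      refine hd.congr_deriv ?_
      simp [hu_def, OrotC, e1crossC, WithLp.equiv_symm_apply, PiLp.toLp_apply, PiLp.smul_apply,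
        PiLp.sub_apply, smul_eq_mul, Complex.real_smul]
      try push_cast
      try ring
  -- rewrite u using the PDE
  have hnorm : (‖y t‖ : ℝ) = ‖ζ‖ := norm_OrotTR _ _
  have hzero : y t 0 = ζ 0 := OrotTR_zero _ _
  have hu : u = ψ (y t)
      - ((‖ζ‖ ^ 2 : ℂ) - Complex.I * (R : ℂ) * (ζ 0 : ℂ)) • v (y t) := by
    rw [← h (y t), hnorm, hzero]
    rw [hu_def, smul_sub]
    abel
  rw [hu, OrotC_sub, OrotC_smul] at hD
  exact hD
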